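/- For every real α and every vector v ∈ ℂ⁴ (two qubits), (CCZ(2α) · TOF) applied to v ⊗ ζ_α equals (CZ(α) v) ⊗ ζ_α, where ζ_α = (1/√2)(e₀ + e^{iα} e₁), CZ(α) = diag(1,1,1,e^{iα}) is the controlled-Z(α) gate on the two data qubits, CCZ(2α) is the 8×8 diagonal matrix which is the identity except for the entry e^{2iα} at basis state |111⟩, and TOF is the Toffoli gate with the two data qubits as controls and the catalyst qubit as target. That is, the catalysis of a phase gate by a controlled phase gate remains valid when an additional control wire is added to the whole circuit. -/
import Mathlib


/- STATEMENT 2: Catalysis with an added control wire: a CCZ(2α) gate together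
with one Toffoli catalytically applies the gate CZ(α) on the two data qubits,
using the catalyst |Z(α)⟩ = (1/√2)(e₀ + e^{iα} e₁). -/

open Complex Matrix

noncomputable section

/-- The controlled-phase gate `CZ(α) = diag(1, 1, 1, e^{iα})` on two qubits. -/
def CZ (α : ℝ) : Matrix (Fin 4) (Fin 4) ℂ :=
  !![1, 0, 0, 0; 0, 1, 0, 0; 0, 0, 1, 0; 0, 0, 0, Complex.exp (Complex.I * α)]

/-- The doubly-controlled phase gate `CCZ(β)`: identity except for the entry
`e^{iβ}` at the basis state `|111⟩` (index 7). -/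
def CCZ (β : ℝ) : Matrix (Fin 8) (Fin 8) ℂ :=
  Matrix.diagonal fun k => if k = 7 then Complex.exp (Complex.I * β) else 1

/-- The Toffoli gate: the permutation matrix sending `|x,y,z⟩` to `|x,y,z⊕(x·y)⟩`,
i.e. the permutation of `Fin 8` swapping the basis states 6 = |110⟩ and 7 = |111⟩. -/
def TOF : Matrix (Fin 8) (Fin 8) ℂ :=
  Matrix.of fun i j => if j = Equiv.swap (6 : Fin 8) 7 i then 1 else 0

/-- Kronecker product of a two-qubit vector with a one-qubit vector:
`(v ⊗ w)(2k+j) = v(k)·w(j)`. -/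
def kron42 (v : Fin 4 → ℂ) (w : Fin 2 → ℂ) : Fin 8 → ℂ :=
  fun k => v ⟨k.val / 2, by have := k.isLt; omega⟩ * w ⟨k.val % 2, by omega⟩

/-- The catalyst state `|Z(α)⟩ = (1/√2)(e₀ + e^{iα} e₁)`. -/
def zeta (α : ℝ) : Fin 2 → ℂ :=
  fun i => (1 / Real.sqrt 2) * (if i = 0 then 1 else Complex.exp (Complex.I * α))
lemma tof_mulVec (u : Fin 8 → ℂ) :
    TOF.mulVec u = ![u 0, u 1, u 2, u 3, u 4, u 5, u 7, u 6] := by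
  have hs : ∀ i : Fin 8, Equiv.swap (6:Fin 8) 7 i = ![0,1,2,3,4,5,7,6] i := by decide
  funext i
  fin_cases i <;>
    simp (config := { decide := true }) [TOF, Matrix.mulVec, dotProduct,
      Fin.sum_univ_eight, hs] <;> rfl

lemma tof8 (a b c d e f g h : ℂ) :
    TOF.mulVec ![a, b, c, d, e, f, g, h] = ![a, b, c, d, e, f, h, g] := by
  rw [tof_mulVec]; congr 1

lemma ccz_mulVec (β : ℝ) (u : Fin 8 → ℂ) :
    (CCZ β).mulVec u = ![u 0, u 1, u 2, u 3, u 4, u 5, u 6,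
      Complex.exp (Complex.I * β) * u 7] := by
  funext i
  fin_cases i <;>
    simp (config := { decide := true }) [CCZ, Matrix.mulVec_diagonal] <;> rfl

lemma ccz8 (β : ℝ) (a b c d e f g h : ℂ) :
    (CCZ β).mulVec ![a, b, c, d, e, f, g, h]
      = ![a, b, c, d, e, f, g, Complex.exp (Complex.I * β) * h] := by
  rw [ccz_mulVec]; congr 1

lemma cz_mulVec (α : ℝ) (v : Fin 4 → ℂ) :
    (CZ α).mulVec v = ![v 0, v 1, v 2, Complex.exp (Complex.I * α) * v 3] := by
  funext i
  fin_cases i <;>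
    simp [CZ, Matrix.mulVec, dotProduct, Fin.sum_univ_four]

lemma kron42_eq (v : Fin 4 → ℂ) (w : Fin 2 → ℂ) :
    kron42 v w = ![v 0 * w 0, v 0 * w 1, v 1 * w 0, v 1 * w 1,
      v 2 * w 0, v 2 * w 1, v 3 * w 0, v 3 * w 1] := by
  funext k; fin_cases k <;> rfl

lemma kron8 (a b c d : ℂ) (w : Fin 2 → ℂ) :
    kron42 ![a, b, c, d] w = ![a * w 0, a * w 1, b * w 0, b * w 1,
      c * w 0, c * w 1, d * w 0, d * w 1] := by
  rw [kron42_eq]; congr 1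

theorem ccz_catalyses_controlled_phase (α : ℝ) (v : Fin 4 → ℂ) :
    (CCZ (2 * α) * TOF).mulVec (kron42 v (zeta α)) = kron42 ((CZ α).mulVec v) (zeta α) := by
  have hexp : Complex.exp (Complex.I * ((2*α:ℝ):ℂ))
      = Complex.exp (Complex.I * α) * Complex.exp (Complex.I * α) := by
    rw [← Complex.exp_add]; push_cast; ring_nf
  rw [← Matrix.mulVec_mulVec, kron42_eq, tof8, ccz8, cz_mulVec, kron8]
  have h6 : v 3 * zeta α 1 = Complex.exp (Complex.I * α) * v 3 * zeta α 0 := by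
    simp [zeta]; ring
  have h7 : Complex.exp (Complex.I * ((2 * α : ℝ) : ℂ)) * (v 3 * zeta α 0)
      = Complex.exp (Complex.I * α) * v 3 * zeta α 1 := by
    rw [hexp]; simp [zeta]; ring
  exact congrArg₂ Matrix.vecCons rfl (congrArg₂ Matrix.vecCons rfl
    (congrArg₂ Matrix.vecCons rfl (congrArg₂ Matrix.vecCons rfl
    (congrArg₂ Matrix.vecCons rfl (congrArg₂ Matrix.vecCons rfl
    (congrArg₂ Matrix.vecCons h6 (congrArg₂ Matrix.vecCons h7 rfl)))))))

end
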